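/- arXiv:2412.11822 — 5 statements merged into one kernel-verified Lean document; each statement's English description precedes it below -/
import Mathlib

section
/- Define u : ℝ³ → ℝ by u(x, y, t) = ((e^{4t} − 1)/4)(x² + y²) + (1/16)((7/4)e^{−4t} − (1/4)e^{4t} − 4t²). Then at every point of ℝ³ one has σ₁(λ(D²u)) > 0 (i.e., u is 1-convex) and σ₂(λ(D²u)) + σ₁(λ(D²u)) = 1. -/
open scoped BigOperators

noncomputable section

/-- The Hessian matrix `D²u(x)`. -/
def hess {n : ℕ} (u : (Fin n → ℝ) → ℝ) (x : Fin n → ℝ) : Matrix (Fin n) (Fin n) ℝ :=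
  Matrix.of fun i j => iteratedFDeriv ℝ 2 u x ![Pi.single i 1, Pi.single j 1]

/-- `σ₁` of the eigenvalues of a `3 × 3` matrix, i.e. its trace. -/
def sigma1Mat (A : Matrix (Fin 3) (Fin 3) ℝ) : ℝ := Matrix.trace A

/-- `σ₂` of the eigenvalues of a `3 × 3` matrix, i.e. the sum of its
`2 × 2` principal minors. -/
def sigma2Mat (A : Matrix (Fin 3) (Fin 3) ℝ) : ℝ :=
  (A 0 0 * A 1 1 - A 0 1 * A 1 0) + (A 0 0 * A 2 2 - A 0 2 * A 2 0)
    + (A 1 1 * A 2 2 - A 1 2 * A 2 1)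

/-- Warren-type example: `u(x,y,t) = ((e^{4t}-1)/4)(x²+y²) + (1/16)((7/4)e^{-4t} - (1/4)e^{4t} - 4t²)`,
with coordinates `x = v 0`, `y = v 1`, `t = v 2`. -/
def uWarren : (Fin 3 → ℝ) → ℝ := fun v =>
  ((Real.exp (4 * v 2) - 1) / 4) * ((v 0) ^ 2 + (v 1) ^ 2)
    + (1 / 16) * ((7 / 4) * Real.exp (-(4 * v 2))
        - (1 / 4) * Real.exp (4 * v 2) - 4 * (v 2) ^ 2)

/-! ### Auxiliary machinery for computing the Hessian of `uWarren` -/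

/-- Coordinate projection as a continuous linear map. -/
def pr (i : Fin 3) : (Fin 3 → ℝ) →L[ℝ] ℝ := ContinuousLinearMap.proj i

lemma hproj (i : Fin 3) (y : Fin 3 → ℝ) :
    HasFDerivAt (fun v : Fin 3 → ℝ => v i) (pr i) y := (pr i).hasFDerivAt

lemma hE (y : Fin 3 → ℝ) :
    HasFDerivAt (fun v : Fin 3 → ℝ => Real.exp (4 * v 2))
      ((4 * Real.exp (4 * y 2)) • pr 2) y := by
  have h := (Real.hasDerivAt_exp (4 * y 2)).comp_hasFDerivAt y ((hproj 2 y).const_mul 4)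
  refine h.congr_fderiv ?_
  rw [smul_smul, mul_comm]

lemma hEm (y : Fin 3 → ℝ) :
    HasFDerivAt (fun v : Fin 3 → ℝ => Real.exp (-(4 * v 2)))
      ((-4 * Real.exp (-(4 * y 2))) • pr 2) y := by
  have h := (Real.hasDerivAt_exp (-(4 * y 2))).comp_hasFDerivAt y ((hproj 2 y).const_mul 4).neg
  refine h.congr_fderiv ?_
  rw [smul_neg, smul_smul, ← neg_smul]
  congr 1; ring

/-- `∂u/∂x`. -/
def c0 (y : Fin 3 → ℝ) : ℝ := ((Real.exp (4 * y 2) - 1) / 4) * (2 * y 0)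
/-- `∂u/∂y`. -/
def c1 (y : Fin 3 → ℝ) : ℝ := ((Real.exp (4 * y 2) - 1) / 4) * (2 * y 1)
/-- `∂u/∂t`. -/
def c2 (y : Fin 3 → ℝ) : ℝ :=
  Real.exp (4 * y 2) * ((y 0) ^ 2 + (y 1) ^ 2)
    + (1 / 16) * ((-7) * Real.exp (-(4 * y 2)) - Real.exp (4 * y 2) - 8 * y 2)

/-- The gradient of `uWarren` as a continuous linear map. -/
def DW (y : Fin 3 → ℝ) : (Fin 3 → ℝ) →L[ℝ] ℝ :=
  c0 y • pr 0 + c1 y • pr 1 + c2 y • pr 2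

lemma hA (y : Fin 3 → ℝ) :
    HasFDerivAt (fun v : Fin 3 → ℝ => (Real.exp (4 * v 2) - 1) / 4)
      (Real.exp (4 * y 2) • pr 2) y := by
  have e : (fun v : Fin 3 → ℝ => (Real.exp (4 * v 2) - 1) / 4)
      = fun v : Fin 3 → ℝ => (1/4) * (Real.exp (4 * v 2) - 1) := by funext v; ring
  rw [e]
  have h := ((hE y).sub_const 1).const_mul (1/4)
  refine h.congr_fderiv ?_
  rw [smul_smul]; congr 1; ring

lemma hQ (y : Fin 3 → ℝ) :
    HasFDerivAt (fun v : Fin 3 → ℝ => (v 0) ^ 2 + (v 1) ^ 2)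
      ((2 * y 0) • pr 0 + (2 * y 1) • pr 1) y := by
  have h := ((hasDerivAt_pow 2 (y 0)).comp_hasFDerivAt y (hproj 0 y)).add
    ((hasDerivAt_pow 2 (y 1)).comp_hasFDerivAt y (hproj 1 y))
  refine h.congr_fderiv ?_
  norm_num

lemma hasFDerivAt_uWarren (y : Fin 3 → ℝ) : HasFDerivAt uWarren (DW y) y := by
  have hB := (hA y).mul (hQ y)
  have hC := ((((hEm y).const_mul (7/4)).sub ((hE y).const_mul (1/4))).sub
      (((hasDerivAt_pow 2 (y 2)).comp_hasFDerivAt y (hproj 2 y)).const_mul 4)).const_mul (1/16)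
  have H : HasFDerivAt uWarren _ y := hB.add hC
  refine H.congr_fderiv ?_
  ext w
  simp [DW, c0, c1, c2, pr, mul_comm]
  ring

def G0 (y : Fin 3 → ℝ) : (Fin 3 → ℝ) →L[ℝ] ℝ :=
  ((Real.exp (4 * y 2) - 1) / 2) • pr 0 + (2 * Real.exp (4 * y 2) * y 0) • pr 2
def G1 (y : Fin 3 → ℝ) : (Fin 3 → ℝ) →L[ℝ] ℝ :=
  ((Real.exp (4 * y 2) - 1) / 2) • pr 1 + (2 * Real.exp (4 * y 2) * y 1) • pr 2
def G2 (y : Fin 3 → ℝ) : (Fin 3 → ℝ) →L[ℝ] ℝ :=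
  (2 * Real.exp (4 * y 2) * y 0) • pr 0 + (2 * Real.exp (4 * y 2) * y 1) • pr 1
    + (4 * Real.exp (4 * y 2) * ((y 0) ^ 2 + (y 1) ^ 2)
        + (7/4) * Real.exp (-(4 * y 2)) - (1/4) * Real.exp (4 * y 2) - 1/2) • pr 2

lemma hc0 (y : Fin 3 → ℝ) : HasFDerivAt c0 (G0 y) y := by
  have h := (hA y).mul ((hproj 0 y).const_mul 2)
  refine h.congr_fderiv ?_
  ext w
  simp [G0, pr, smul_smul]
  ring

lemma hc1 (y : Fin 3 → ℝ) : HasFDerivAt c1 (G1 y) y := by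
  have h := (hA y).mul ((hproj 1 y).const_mul 2)
  refine h.congr_fderiv ?_
  ext w
  simp [G1, pr, smul_smul]
  ring

lemma hc2 (y : Fin 3 → ℝ) : HasFDerivAt c2 (G2 y) y := by
  have h := ((hE y).mul (hQ y)).add
    (((((hEm y).const_mul (-7)).sub (hE y)).sub ((hproj 2 y).const_mul 8)).const_mul (1/16))
  refine h.congr_fderiv ?_
  ext w
  simp [G2, pr, smul_smul]
  ring

/-- The second derivative of `uWarren`. -/
def D2 (y : Fin 3 → ℝ) : (Fin 3 → ℝ) →L[ℝ] ((Fin 3 → ℝ) →L[ℝ] ℝ) :=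
  ((G0 y).smulRight (pr 0) + (G1 y).smulRight (pr 1)) + (G2 y).smulRight (pr 2)

lemma hasFDerivAt_DW (y : Fin 3 → ℝ) : HasFDerivAt DW (D2 y) y :=
  (((hc0 y).smul_const (pr 0)).add ((hc1 y).smul_const (pr 1))).add ((hc2 y).smul_const (pr 2))

lemma fderiv_fderiv_uWarren (v : Fin 3 → ℝ) :
    fderiv ℝ (fderiv ℝ uWarren) v = D2 v := by
  have hfd : fderiv ℝ uWarren = DW := funext fun y => (hasFDerivAt_uWarren y).fderiv
  rw [hfd]
  exact (hasFDerivAt_DW v).fderiv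

lemma hess_uWarren (v : Fin 3 → ℝ) (i j : Fin 3) :
    hess uWarren v i j = D2 v (Pi.single i 1) (Pi.single j 1) := by
  rw [hess, Matrix.of_apply, iteratedFDeriv_two_apply, fderiv_fderiv_uWarren]
  simp

/-- **A non-polynomial entire `1`-convex solution of the sum Hessian equation**
(Example 1.8): `uWarren` satisfies `σ₁(λ(D²u)) > 0` (it is `1`-convex) and
`σ₂(λ(D²u)) + σ₁(λ(D²u)) = 1` at every point of `ℝ³`. -/
theorem warren_example_sum_hessian :
    ∀ v : Fin 3 → ℝ,
      0 < sigma1Mat (hess uWarren v) ∧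
      sigma2Mat (hess uWarren v) + sigma1Mat (hess uWarren v) = 1 := by
  intro v
  have hs : 0 < Real.exp (4 * v 2) := Real.exp_pos _
  have hm : 0 < Real.exp (-(4 * v 2)) := Real.exp_pos _
  have hsm : Real.exp (4 * v 2) * Real.exp (-(4 * v 2)) = 1 := by
    rw [← Real.exp_add]; simp
  simp only [sigma1Mat, sigma2Mat, Matrix.trace, Matrix.diag, Fin.sum_univ_three,
    hess_uWarren, D2, G0, G1, G2, pr]
  simp only [ContinuousLinearMap.add_apply, ContinuousLinearMap.smulRight_apply,
    ContinuousLinearMap.smul_apply, ContinuousLinearMap.proj_apply, Pi.single_apply,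
    smul_eq_mul]
  have e20 : ((2:Fin 3) = 0) = False := by decide
  have e21 : ((2:Fin 3) = 1) = False := by decide
  have e02 : ((0:Fin 3) = 2) = False := by decide
  have e12 : ((1:Fin 3) = 2) = False := by decide
  have e01 : ((0:Fin 3) = 1) = False := by decide
  have e10 : ((1:Fin 3) = 0) = False := by decide
  simp only [e20, e21, e02, e12, e01, e10, if_false, if_true, eq_self_iff_true, add_zero, zero_add]
  norm_num
  constructor
  · nlinarith [mul_nonneg hm.le (sq_nonneg (Real.exp (4 * v 2) - 1)),
      mul_nonneg hs.le (add_nonneg (sq_nonneg (v 0)) (sq_nonneg (v 1)))]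
  · nlinarith [hsm, sq_nonneg (v 0), sq_nonneg (v 1)]
end
end

section
/- Let 2 ≤ k ≤ n. There exists a constant θ > 0 depending only on n and k such that for every α > 0, every λ ∈ Γ̃_k with λ₁ ≥ λ₂ ≥ ⋯ ≥ λ_n, and every index 1 ≤ j ≤ k−1 (for which λ_j > 0): S_k^{jj}(λ) ≥ θ · S_k(λ)/λ_j. -/
open scoped BigOperators

noncomputable section

/-- The `j`-th elementary symmetric function of the entries of `lam` indexed by `T`
(`j : ℤ`, with value `0` for `j < 0`). -/
def sigmaOn {n : ℕ} (T : Finset (Fin n)) (j : ℤ) (lam : Fin n → ℝ) : ℝ :=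
  if 0 ≤ j then ∑ s ∈ T.powersetCard j.toNat, ∏ i ∈ s, lam i else 0

/-- The `j`-th elementary symmetric polynomial `σ_j(λ)`. -/
def esymmR {n : ℕ} (j : ℤ) (lam : Fin n → ℝ) : ℝ := sigmaOn Finset.univ j lam

/-- The Garding cone `Γ_k`. -/
def GammaCone (n k : ℕ) : Set (Fin n → ℝ) :=
  {lam | ∀ i : ℕ, 1 ≤ i → i ≤ k → 0 < esymmR (i : ℤ) lam}

/-- `S_j(λ) = σ_j(λ) + α σ_{j-1}(λ)`. -/
def Sfun {n : ℕ} (α : ℝ) (j : ℤ) (lam : Fin n → ℝ) : ℝ :=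
  esymmR j lam + α * esymmR (j - 1) lam

/-- The cone `Γ̃_k = Γ_{k-1} ∩ {λ : S_k(λ) > 0}`. -/
def GammaTilde (n k : ℕ) (α : ℝ) : Set (Fin n → ℝ) :=
  GammaCone n (k - 1) ∩ {lam | 0 < Sfun α (k : ℤ) lam}

/-- `S_k^{pp}(λ) = σ_{k-1}(λ|p) + α σ_{k-2}(λ|p)`, where `(λ|p)` deletes the
`p`-th entry of `λ`. -/
def SD {n : ℕ} (α : ℝ) (k : ℤ) (lam : Fin n → ℝ) (p : Fin n) : ℝ :=
  sigmaOn (Finset.univ.erase p) (k - 1) lam + α * sigmaOn (Finset.univ.erase p) (k - 2) lam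

/-- `S_k^{pp,qq}(λ) = σ_{k-2}(λ|pq) + α σ_{k-3}(λ|pq)` for `p ≠ q`, where `(λ|pq)`
deletes the `p`-th and `q`-th entries of `λ`. -/
def SDD {n : ℕ} (α : ℝ) (k : ℤ) (lam : Fin n → ℝ) (p q : Fin n) : ℝ :=
  sigmaOn ((Finset.univ.erase p).erase q) (k - 2) lam
    + α * sigmaOn ((Finset.univ.erase p).erase q) (k - 3) lam

/-!
Append `α` to `λ` as an extra coordinate: `x = (λ, α) ∈ ℝⁿ⁺¹`. Since
`σ_m(x) = σ_m(λ) + α σ_{m-1}(λ)`, this turns `S_k(λ)` into `σ_k(x)`, `S_k^{jj}(λ)` into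
`σ_{k-1}(x|j)` and `Γ̃_k` into the Gårding cone `Γ_k` of `ℝⁿ⁺¹`; and for ordered `λ` at most
`j ≤ k - 1` entries of `x` (namely `λ_1, …, λ_{j-1}` and `α`) exceed `x_j`.

For `x ∈ Γ_k` with `N` entries and an entry `x_p` exceeded by at most `k - 1` others,
`σ_k(x) ≤ (N - k + 1) x_p σ_{k-1}(x|p)` by induction on `N`: split
`σ_k(x) = σ_k(x|p) + x_p σ_{k-1}(x|p)`; if `σ_k(x|p) > 0`, apply the induction hypothesis to
`x|p` at its largest entry `x_q ≤ x_p` and use `x_q σ_{k-1}(x|pq) ≤ x_p σ_{k-1}(x|p)`.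
So `θ = 1/(n - k + 2)` works.

The induction rests on the classical fact that `x ∈ Γ_{m+1}` implies `x|p ∈ Γ_m`. Move `x`
along the segment to `(1, …, 1)`, which stays in `Γ_{m+1}`, and stop at the last point `y`
where `σ_m(y|p) = 0`. There `σ_{m+1}(y|p) = σ_{m+1}(y) > 0`, while each term of
`∑_q y_q σ_m(y|pq) = (m+1) σ_{m+1}(y|p)` equals `-y_q² σ_{m-1}(y|pq) ≤ 0`, since by induction
`σ_{m-1}(y|pq)` is a limit of positive numbers.
-/

open Finset

section

variable {ι : Type*}

def esymmOn (T : Finset ι) (j : ℕ) (x : ι → ℝ) : ℝ := ∑ S ∈ T.powersetCard j, ∏ i ∈ S, x i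

def GardingOn (T : Finset ι) (m : ℕ) (x : ι → ℝ) : Prop := ∀ j, 1 ≤ j → j ≤ m → 0 < esymmOn T j x

@[simp] theorem esymmOn_zero (T : Finset ι) (x : ι → ℝ) : esymmOn T 0 x = 1 := by
  simp [esymmOn]

theorem esymmOn_eq_zero_of_card_lt {T : Finset ι} {j : ℕ} (h : #T < j) (x : ι → ℝ) :
    esymmOn T j x = 0 := by
  simp [esymmOn, powersetCard_eq_empty.2 h]

theorem esymmOn_one (T : Finset ι) (j : ℕ) : esymmOn T j 1 = (#T).choose j := by
  simp [esymmOn, card_powersetCard]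

theorem continuous_esymmOn (T : Finset ι) (j : ℕ) : Continuous (esymmOn T j) := by
  unfold esymmOn; fun_prop

theorem esymmOn_map {κ : Type*} (f : ι ↪ κ) (T : Finset ι) (j : ℕ) (x : κ → ℝ) :
    esymmOn (T.map f) j x = esymmOn T j (x ∘ f) := by
  simp [esymmOn, powersetCard_map, prod_map]

theorem GardingOn.mono {T : Finset ι} {m m' : ℕ} {x : ι → ℝ} (h : GardingOn T m x) (hm : m' ≤ m) :
    GardingOn T m' x :=
  fun j hj hjm => h j hj (hjm.trans hm)

theorem GardingOn.esymmOn_pos {T : Finset ι} {m j : ℕ} {x : ι → ℝ} (h : GardingOn T m x)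
    (hj : j ≤ m) : 0 < esymmOn T j x := by
  rcases Nat.eq_zero_or_pos j with rfl | hj0
  · simp
  · exact h j hj0 hj

theorem GardingOn.le_card {T : Finset ι} {m : ℕ} {x : ι → ℝ} (h : GardingOn T m x) : m ≤ #T := by
  by_contra! hm
  exact (h.esymmOn_pos le_rfl).ne' (esymmOn_eq_zero_of_card_lt hm x)

theorem gardingOn_succ_iff {T : Finset ι} {m : ℕ} {x : ι → ℝ} :
    GardingOn T (m + 1) x ↔ GardingOn T m x ∧ 0 < esymmOn T (m + 1) x := by
  refine ⟨fun h => ⟨h.mono m.le_succ, h.esymmOn_pos le_rfl⟩, fun ⟨h, hm⟩ j hj hjm => ?_⟩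
  rcases hjm.lt_or_eq with hjm | rfl
  · exact h j hj (Nat.lt_succ_iff.1 hjm)
  · exact hm

variable [DecidableEq ι]

theorem esymmOn_insert {T : Finset ι} {p : ι} (hp : p ∉ T) (j : ℕ) (x : ι → ℝ) :
    esymmOn (insert p T) (j + 1) x = esymmOn T (j + 1) x + x p * esymmOn T j x := by
  have hinj : Set.InjOn (insert p) (T.powersetCard j : Set (Finset ι)) := fun S hS S' hS' h => by
    have hpS : p ∉ S := fun h' => hp ((mem_powersetCard.1 hS).1 h')
    have hpS' : p ∉ S' := fun h' => hp ((mem_powersetCard.1 hS').1 h')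
    simpa [erase_insert hpS, erase_insert hpS'] using congrArg (·.erase p) h
  have hdisj : Disjoint (T.powersetCard (j + 1)) ((T.powersetCard j).image (insert p)) := by
    refine disjoint_left.2 fun S hS hS' => ?_
    obtain ⟨S', -, rfl⟩ := mem_image.1 hS'
    exact hp ((mem_powersetCard.1 hS).1 (mem_insert_self p S'))
  rw [esymmOn, powersetCard_succ_insert hp, sum_union hdisj, sum_image hinj, esymmOn, esymmOn,
    mul_sum]
  congr 1
  exact sum_congr rfl fun S hS => prod_insert fun h' => hp ((mem_powersetCard.1 hS).1 h')

theorem esymmOn_succ_of_mem {T : Finset ι} {p : ι} (hp : p ∈ T) (j : ℕ) (x : ι → ℝ) :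
    esymmOn T (j + 1) x = esymmOn (T.erase p) (j + 1) x + x p * esymmOn (T.erase p) j x := by
  conv_lhs => rw [← insert_erase hp]
  exact esymmOn_insert (notMem_erase p T) j x

theorem sum_mul_esymmOn_erase (T : Finset ι) (j : ℕ) (x : ι → ℝ) :
    ∑ q ∈ T, x q * esymmOn (T.erase q) j x = (j + 1) * esymmOn T (j + 1) x := by
  have hterm : ∀ q ∈ T, x q * esymmOn (T.erase q) j x
      = ∑ S ∈ T.powersetCard (j + 1), if q ∈ S then ∏ i ∈ S, x i else 0 := by
    intro q hq
    have hnot : {S ∈ T.powersetCard (j + 1) | q ∉ S} = (T.erase q).powersetCard (j + 1) := by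
      ext S; simp only [mem_filter, mem_powersetCard, subset_erase]; tauto
    have hsplit := sum_filter_add_sum_filter_not (T.powersetCard (j + 1)) (q ∈ ·) (∏ i ∈ ·, x i)
    rw [← esymmOn, esymmOn_succ_of_mem hq, hnot, ← esymmOn] at hsplit
    rw [← sum_filter]
    linarith
  rw [sum_congr rfl hterm, sum_comm, esymmOn, mul_sum]
  refine sum_congr rfl fun S hS => ?_
  rw [← sum_filter, sum_const, nsmul_eq_mul, filter_mem_eq_inter,
    inter_eq_right.2 (mem_powersetCard.1 hS).1, (mem_powersetCard.1 hS).2]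
  push_cast; ring

theorem prod_mul_add_const (S : Finset ι) (x : ι → ℝ) (a b : ℝ) :
    ∏ i ∈ S, (a * x i + b)
      = ∑ r ∈ range (#S + 1), a ^ r * b ^ (#S - r) * esymmOn S r x := by
  rw [prod_add, sum_powerset]
  refine sum_congr rfl fun r _ => ?_
  rw [esymmOn, mul_sum]
  refine sum_congr rfl fun R hR => ?_
  rw [mem_powersetCard] at hR
  rw [prod_mul_distrib, prod_const, prod_const, card_sdiff_of_subset hR.1, hR.2]
  ring

theorem card_filter_superset {T R : Finset ι} (hR : R ⊆ T) {j : ℕ} (hj : #R ≤ j) :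
    #{S ∈ T.powersetCard j | R ⊆ S} = (#T - #R).choose (j - #R) := by
  rw [← card_sdiff_of_subset hR, ← card_powersetCard]
  refine card_bij' (fun S _ => S \ R) (fun S _ => S ∪ R) (fun S hS => ?_) (fun S hS => ?_)
    (fun S hS => ?_) (fun S hS => ?_)
  · rw [mem_filter, mem_powersetCard] at hS
    rw [mem_powersetCard]
    exact ⟨sdiff_subset_sdiff hS.1.1 le_rfl, by rw [card_sdiff_of_subset hS.2, hS.1.2]⟩
  · rw [mem_powersetCard] at hS
    have hd : Disjoint S R := disjoint_of_subset_left hS.1 sdiff_disjoint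
    rw [mem_filter, mem_powersetCard, card_union_of_disjoint hd, hS.2]
    exact ⟨⟨union_subset (hS.1.trans sdiff_subset) hR, by omega⟩, subset_union_right⟩
  · exact sdiff_union_of_subset (mem_filter.1 hS).2
  · exact union_sdiff_cancel_right
      (disjoint_of_subset_left (mem_powersetCard.1 hS).1 sdiff_disjoint)

theorem sum_powersetCard_esymmOn (T : Finset ι) {r j : ℕ} (hrj : r ≤ j) (x : ι → ℝ) :
    ∑ S ∈ T.powersetCard j, esymmOn S r x = (#T - r).choose (j - r) * esymmOn T r x := by
  simp only [esymmOn]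
  rw [sum_comm' (t' := T.powersetCard r) (s' := fun R => {S ∈ T.powersetCard j | R ⊆ S})]
  · rw [mul_sum]
    refine sum_congr rfl fun R hR => ?_
    rw [mem_powersetCard] at hR
    rw [sum_const, nsmul_eq_mul, card_filter_superset hR.1 (hR.2 ▸ hrj), hR.2]
  · intro S R
    simp only [mem_powersetCard, mem_filter]
    exact ⟨fun ⟨hS, hRS, hR⟩ => ⟨⟨hS, hRS⟩, hRS.trans hS.1, hR⟩,
      fun ⟨⟨hS, hRS⟩, _, hR⟩ => ⟨hS, hRS, hR⟩⟩

theorem esymmOn_mul_add_const (T : Finset ι) (j : ℕ) (x : ι → ℝ) (a b : ℝ) :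
    esymmOn T j (fun i => a * x i + b)
      = ∑ r ∈ range (j + 1), a ^ r * b ^ (j - r) * (#T - r).choose (j - r) * esymmOn T r x := by
  calc esymmOn T j (fun i => a * x i + b)
      = ∑ S ∈ T.powersetCard j, ∑ r ∈ range (j + 1), a ^ r * b ^ (j - r) * esymmOn S r x := by
        refine sum_congr rfl fun S hS => ?_
        rw [prod_mul_add_const, (mem_powersetCard.1 hS).2]
    _ = _ := by
        rw [sum_comm]
        refine sum_congr rfl fun r hr => ?_
        rw [← mul_sum, sum_powersetCard_esymmOn T (Nat.lt_succ_iff.1 (mem_range.1 hr))]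
        ring

theorem GardingOn.lineMap_one {T : Finset ι} {m : ℕ} {x : ι → ℝ} (hx : GardingOn T m x) {s : ℝ}
    (hs : s ∈ Set.Icc (0 : ℝ) 1) : GardingOn T m (AffineMap.lineMap x 1 s) := by
  intro j hj hjm
  obtain ⟨hs0, hs1⟩ := hs
  have hfun : AffineMap.lineMap x (1 : ι → ℝ) s = fun i => (1 - s) * x i + s :=
    funext fun i => by simp [AffineMap.lineMap_apply_module]
  have hterm : ∀ r ∈ range (j + 1),
      0 ≤ (1 - s) ^ r * s ^ (j - r) * (#T - r).choose (j - r) * esymmOn T r x := fun r hr => by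
    have := (hx.esymmOn_pos ((Nat.lt_succ_iff.1 (mem_range.1 hr)).trans hjm)).le
    have : 0 ≤ 1 - s := by linarith
    positivity
  rw [hfun, esymmOn_mul_add_const]
  rcases hs1.lt_or_eq with hs1 | rfl
  · refine sum_pos' hterm ⟨j, self_mem_range_succ j, ?_⟩
    have := hx j hj hjm
    have : 0 < 1 - s := by linarith
    simp only [Nat.sub_self, pow_zero, Nat.choose_zero_right, Nat.cast_one, mul_one]
    positivity
  · refine sum_pos' hterm ⟨0, mem_range.2 (Nat.succ_pos j), ?_⟩
    have : 0 < (#T).choose j := Nat.choose_pos (hjm.trans hx.le_card)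
    simp only [pow_zero, Nat.sub_zero, esymmOn_zero, one_pow, one_mul, mul_one]
    positivity

theorem exists_eq_zero_forall_pos_Ioc {g : ℝ → ℝ} (hg : Continuous g) (h0 : g 0 ≤ 0)
    (h1 : 0 < g 1) : ∃ t ∈ Set.Ico (0 : ℝ) 1, g t = 0 ∧ ∀ s ∈ Set.Ioc t 1, 0 < g s := by
  have hZ : IsCompact (Set.Icc (0 : ℝ) 1 ∩ g ⁻¹' Set.Iic 0) :=
    isCompact_Icc.inter_right (isClosed_Iic.preimage hg)
  obtain ⟨t, ⟨ht, hgt⟩, htmax⟩ := hZ.exists_isGreatest ⟨0, ⟨le_rfl, zero_le_one⟩, h0⟩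
  have ht1 : t < 1 := ht.2.lt_of_ne fun h => by rw [h] at hgt; exact (not_le.2 h1) hgt
  have hpos : ∀ s ∈ Set.Ioc t 1, 0 < g s := fun s hs => by
    by_contra! hs'
    exact (not_le.2 hs.1) (htmax ⟨⟨ht.1.trans hs.1.le, hs.2⟩, hs'⟩)
  refine ⟨t, ⟨ht.1, ht1⟩, le_antisymm hgt ?_, hpos⟩
  by_contra! hneg
  obtain ⟨s, hs, hgs⟩ := intermediate_value_Ioo ht.2 hg.continuousOn ⟨hneg, h1⟩
  exact (hpos s ⟨hs.1, hs.2.le⟩).ne' hgs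

theorem nonneg_of_forall_Ioc_pos {h : ℝ → ℝ} (hh : Continuous h) {t u : ℝ} (htu : t < u)
    (hpos : ∀ s ∈ Set.Ioc t u, 0 < h s) : 0 ≤ h t :=
  ge_of_tendsto ((hh.tendsto t).mono_left nhdsWithin_le_nhds)
    (Filter.eventually_of_mem (Ioc_mem_nhdsGT htu) fun s hs => (hpos s hs).le)

theorem esymmOn_add_two_nonpos_of_eq_zero {U : Finset ι} {m : ℕ} {y : ι → ℝ}
    (h : esymmOn U (m + 1) y = 0) (hq : ∀ q ∈ U, 0 ≤ esymmOn (U.erase q) m y) :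
    esymmOn U (m + 2) y ≤ 0 := by
  have hsum : ∑ q ∈ U, y q * esymmOn (U.erase q) (m + 1) y ≤ 0 := by
    refine sum_nonpos fun q hqU => ?_
    have hrec := esymmOn_succ_of_mem hqU m y
    rw [h] at hrec
    have : y q * esymmOn (U.erase q) (m + 1) y = -(y q ^ 2 * esymmOn (U.erase q) m y) := by
      linear_combination -y q * hrec
    rw [this, neg_nonpos]
    exact mul_nonneg (sq_nonneg _) (hq q hqU)
  rw [sum_mul_esymmOn_erase] at hsum
  have : (0 : ℝ) < (m + 1 : ℕ) + 1 := by positivity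
  push_cast at hsum this
  nlinarith

theorem GardingOn.erase {T : Finset ι} {m : ℕ} {x : ι → ℝ} (hx : GardingOn T (m + 1) x) {p : ι}
    (hp : p ∈ T) : GardingOn (T.erase p) m x := by
  induction m generalizing T x p with
  | zero => intro j hj hj0; omega
  | succ m ih =>
    refine gardingOn_succ_iff.2 ⟨ih (hx.mono (by omega)) hp, ?_⟩
    by_contra! hle
    set c := AffineMap.lineMap (k := ℝ) x (1 : ι → ℝ)
    have hc : ∀ s ∈ Set.Icc (0 : ℝ) 1, GardingOn T (m + 2) (c s) := fun s hs => hx.lineMap_one hs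
    have hcont : ∀ (V : Finset ι) (j : ℕ), Continuous fun s => esymmOn V j (c s) :=
      fun V j => (continuous_esymmOn V j).comp AffineMap.lineMap_continuous
    have hg1 : 0 < esymmOn (T.erase p) (m + 1) (c 1) := by
      have := hx.le_card
      have : 0 < (#T - 1).choose (m + 1) := Nat.choose_pos (by omega)
      simp only [c, AffineMap.lineMap_apply_one, esymmOn_one, card_erase_of_mem hp]
      positivity
    obtain ⟨t, ht, hgt, hpos⟩ :=
      exists_eq_zero_forall_pos_Ioc (hcont _ _) (by simpa [c] using hle) hg1
    have hU : ∀ s ∈ Set.Ioc t 1, GardingOn (T.erase p) (m + 1) (c s) := fun s hs =>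
      gardingOn_succ_iff.2
        ⟨ih ((hc s ⟨ht.1.trans hs.1.le, hs.2⟩).mono (by omega)) hp, hpos s hs⟩
    have hq : ∀ q ∈ T.erase p, 0 ≤ esymmOn ((T.erase p).erase q) m (c t) := fun q hq =>
      nonneg_of_forall_Ioc_pos (hcont _ _) ht.2 fun s hs => (ih (hU s hs) hq).esymmOn_pos le_rfl
    have hT := (hc t (Set.Ico_subset_Icc_self ht)).esymmOn_pos le_rfl
    rw [esymmOn_succ_of_mem hp, hgt, mul_zero, add_zero] at hT
    exact (not_le.2 hT) (esymmOn_add_two_nonpos_of_eq_zero hgt hq)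

theorem exists_le_and_filter_lt_subset {U : Finset ι} {x : ι → ℝ} {a : ℝ}
    (h : #{i ∈ U | a < x i} < #U) :
    ∃ q ∈ U, x q ≤ a ∧ {i ∈ U.erase q | x q < x i} ⊆ {i ∈ U | a < x i} := by
  have hB : {i ∈ U | x i ≤ a}.Nonempty := by
    by_contra! hB
    refine h.ne (congrArg card (filter_true_of_mem fun i hi => ?_))
    by_contra! hi'
    exact notMem_empty i (hB ▸ mem_filter.2 ⟨hi, hi'⟩)
  obtain ⟨q, hqB, hqmax⟩ := exists_max_image _ x hB
  obtain ⟨hqU, hqa⟩ := mem_filter.1 hqB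
  refine ⟨q, hqU, hqa, fun i hi => ?_⟩
  obtain ⟨hiU, hqi⟩ := mem_filter.1 hi
  refine mem_filter.2 ⟨mem_of_mem_erase hiU, ?_⟩
  by_contra! hia
  exact (not_le.2 hqi) (hqmax i (mem_filter.2 ⟨mem_of_mem_erase hiU, hia⟩))

theorem GardingOn.mul_esymmOn_erase_le {U : Finset ι} {k : ℕ} {x : ι → ℝ}
    (hU : GardingOn U (k + 1) x) {q : ι} (hq : q ∈ U) {a : ℝ} (hqa : x q ≤ a) :
    x q * esymmOn (U.erase q) (k + 1) x ≤ a * esymmOn U (k + 1) x := by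
  have hrec := esymmOn_succ_of_mem hq k x
  have hpos := hU.esymmOn_pos le_rfl
  have hnonneg := ((hU.erase hq).esymmOn_pos le_rfl).le
  calc x q * esymmOn (U.erase q) (k + 1) x
      ≤ x q * esymmOn (U.erase q) (k + 1) x + x q ^ 2 * esymmOn (U.erase q) k x :=
        le_add_of_nonneg_right (mul_nonneg (sq_nonneg _) hnonneg)
    _ = x q * esymmOn U (k + 1) x := by rw [hrec]; ring
    _ ≤ a * esymmOn U (k + 1) x := mul_le_mul_of_nonneg_right hqa hpos.le

theorem GardingOn.esymmOn_le_mul_esymmOn_erase {T : Finset ι} {k : ℕ} {x : ι → ℝ}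
    (hx : GardingOn T (k + 2) x) {p : ι} (hp : p ∈ T)
    (hcount : #{i ∈ T.erase p | x p < x i} ≤ k + 1) :
    esymmOn T (k + 2) x ≤ (#T - (k + 1) : ℕ) * (x p * esymmOn (T.erase p) (k + 1) x) := by
  induction T using Finset.strongInduction generalizing p with
  | H T ih =>
    have hsplit := esymmOn_succ_of_mem hp (k + 1) x
    have hTpos := hx.esymmOn_pos le_rfl
    have hcard := hx.le_card
    have hcoef : ((#T - (k + 1) : ℕ) : ℝ) = (#T - (k + 2) : ℕ) + 1 := by
      rw [← Nat.cast_add_one]; congr 1; omega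
    rw [hcoef]
    rcases le_or_gt (esymmOn (T.erase p) (k + 2) x) 0 with hU | hU
    · have : (0 : ℝ) ≤ (#T - (k + 2) : ℕ) := Nat.cast_nonneg _
      nlinarith
    have hUx : GardingOn (T.erase p) (k + 2) x := gardingOn_succ_iff.2 ⟨hx.erase hp, hU⟩
    obtain ⟨q, hqU, hqp, hsub⟩ :=
      exists_le_and_filter_lt_subset (U := T.erase p) (x := x) (a := x p)
        (by have := hUx.le_card; omega)
    have hind := ih _ (erase_ssubset hp) hUx hqU ((card_le_card hsub).trans hcount)
    have hqle := (hUx.mono (k + 1).le_succ).mul_esymmOn_erase_le hqU hqp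
    rw [card_erase_of_mem hp, show #T - 1 - (k + 1) = #T - (k + 2) by omega] at hind
    calc esymmOn T (k + 2) x
        ≤ (#T - (k + 2) : ℕ) * (x q * esymmOn ((T.erase p).erase q) (k + 1) x)
          + x p * esymmOn (T.erase p) (k + 1) x := by rw [hsplit]; gcongr
      _ ≤ (#T - (k + 2) : ℕ) * (x p * esymmOn (T.erase p) (k + 1) x)
          + x p * esymmOn (T.erase p) (k + 1) x := by gcongr
      _ = _ := by ring

end

theorem sigmaOn_natCast {n : ℕ} (T : Finset (Fin n)) (j : ℕ) (lam : Fin n → ℝ) :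
    sigmaOn T j lam = esymmOn T j lam := by
  simp [sigmaOn, esymmOn]

theorem esymmR_natCast {n : ℕ} (j : ℕ) (lam : Fin n → ℝ) : esymmR j lam = esymmOn univ j lam :=
  sigmaOn_natCast univ j lam

theorem esymmOn_snoc {n : ℕ} (Q : Finset (Fin n)) (j : ℕ) (lam : Fin n → ℝ) (a : ℝ) :
    esymmOn (insert (Fin.last n) (Q.map Fin.castSuccEmb)) (j + 1) (Fin.snoc lam a)
      = esymmOn Q (j + 1) lam + a * esymmOn Q j lam := by
  rw [esymmOn_insert (by simp), esymmOn_map, esymmOn_map, Fin.snoc_last]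
  simp [Function.comp_def]

theorem univ_erase_castSucc {n : ℕ} (j : Fin n) :
    (univ : Finset (Fin (n + 1))).erase j.castSucc
      = insert (Fin.last n) ((univ.erase j).map Fin.castSuccEmb) := by
  ext i
  cases i using Fin.lastCases <;> simp [Fin.castSucc_ne_last, eq_comm]

theorem Sfun_eq_esymmOn_snoc {n k : ℕ} (hk : 1 ≤ k) (α : ℝ) (lam : Fin n → ℝ) :
    Sfun α k lam = esymmOn univ k (Fin.snoc lam α) := by
  obtain ⟨j, rfl⟩ := Nat.exists_eq_add_of_le' hk
  rw [Fin.univ_castSuccEmb, cons_eq_insert, esymmOn_snoc, Sfun, Nat.cast_add_one,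
    add_sub_cancel_right, ← Nat.cast_add_one, esymmR_natCast, esymmR_natCast]

theorem SD_eq_esymmOn_snoc {n : ℕ} (k : ℕ) (α : ℝ) (lam : Fin n → ℝ) (j : Fin n) :
    SD α (k + 2 : ℕ) lam j = esymmOn (univ.erase j.castSucc) (k + 1) (Fin.snoc lam α) := by
  have h1 : ((k + 2 : ℕ) : ℤ) - 1 = (k + 1 : ℕ) := by push_cast; ring
  have h2 : ((k + 2 : ℕ) : ℤ) - 2 = k := by push_cast; ring
  rw [univ_erase_castSucc, esymmOn_snoc, SD, h1, h2, sigmaOn_natCast, sigmaOn_natCast]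

theorem gardingOn_snoc {n k : ℕ} {α : ℝ} (hα : 0 < α) {lam : Fin n → ℝ}
    (hlam : lam ∈ GammaTilde n k α) : GardingOn univ k (Fin.snoc lam α) := by
  intro i hi hik
  rw [← Sfun_eq_esymmOn_snoc hi]
  rcases hik.lt_or_eq with hik | rfl
  · obtain ⟨j, rfl⟩ := Nat.exists_eq_add_of_le' hi
    have hsucc := hlam.1 (j + 1) (by omega) (by omega)
    have hj_pos : 0 < esymmR (j : ℤ) lam := by
      rcases Nat.eq_zero_or_pos j with rfl | hj
      · rw [esymmR_natCast, esymmOn_zero]; exact one_pos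
      · exact hlam.1 j hj (by omega)
    rw [Sfun, Nat.cast_add_one, add_sub_cancel_right]
    rw [Nat.cast_add_one] at hsucc
    positivity
  · exact hlam.2

theorem card_filter_snoc_lt_le {n : ℕ} {lam : Fin n → ℝ} (hlam : Antitone lam) (α : ℝ) (j : Fin n) :
    #{i ∈ univ.erase j.castSucc | lam j < (Fin.snoc lam α : Fin (n + 1) → ℝ) i} ≤ j + 1 := by
  calc _ ≤ #(insert (Fin.last n) ((Iio j).map Fin.castSuccEmb)) := by
        refine card_le_card fun i hi => ?_
        obtain ⟨-, hlt⟩ := mem_filter.1 hi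
        cases i using Fin.lastCases with
        | last => exact mem_insert_self _ _
        | cast i =>
          rw [Fin.snoc_castSucc] at hlt
          refine mem_insert_of_mem (mem_map_of_mem _ (mem_Iio.2 ?_))
          exact lt_of_not_ge fun h => not_lt.2 (hlam h) hlt
    _ ≤ j + 1 := by
        refine (card_insert_le _ _).trans ?_
        rw [card_map, Fin.card_Iio]

/-- **Lower bound for `S_k^{jj}`** (Lemma 2.3 (b)): there is `θ = θ(n,k) > 0`
such that for all `α > 0`, all ordered `λ ∈ Γ̃_k` and every index `j ≤ k-1`
(for which `λ_j > 0`), `S_k^{jj}(λ) ≥ θ S_k(λ)/λ_j`. -/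
theorem SkD_lower_bound
    {n k : ℕ} (hk : 2 ≤ k) (hkn : k ≤ n) :
    ∃ θ : ℝ, 0 < θ ∧
      ∀ α : ℝ, 0 < α → ∀ lam ∈ GammaTilde n k α,
        (∀ i j : Fin n, i ≤ j → lam j ≤ lam i) →
        ∀ j : Fin n, (j : ℕ) + 1 ≤ k - 1 → 0 < lam j →
          θ * Sfun α (k : ℤ) lam / lam j ≤ SD α (k : ℤ) lam j := by
  obtain ⟨m, rfl⟩ := Nat.exists_eq_add_of_le' hk
  have hC : (0 : ℝ) < (n - m : ℕ) := Nat.cast_pos.2 (by omega)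
  refine ⟨(n - m : ℕ)⁻¹, inv_pos.2 hC, fun α hα lam hlam hsorted j hj hlamj => ?_⟩
  have hbound := (gardingOn_snoc hα hlam).esymmOn_le_mul_esymmOn_erase (mem_univ j.castSucc)
    (by rw [Fin.snoc_castSucc]; exact (card_filter_snoc_lt_le hsorted α j).trans (by omega))
  rw [← Sfun_eq_esymmOn_snoc (by omega), Fin.snoc_castSucc, ← SD_eq_esymmOn_snoc, card_univ,
    Fintype.card_fin, Nat.add_sub_add_right] at hbound
  rw [div_le_iff₀ hlamj, inv_mul_le_iff₀ hC]
  linarith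
end
end

section
/- Let 1 ≤ k ≤ n and α > 0. For every λ ∈ Γ̃_k one has S_k(λ)² − S_{k−1}(λ) · S_{k+1}(λ) ≥ 0, where S_j(λ) = σ_j(λ) + α σ_{j−1}(λ) (with σ_j = 0 for j > n). -/
open scoped BigOperators

noncomputable section

namespace SkNewtonAux

open Multiset Polynomial

lemma esymm_zero' (s : Multiset ℝ) : s.esymm 0 = 1 := by
  simp [Multiset.esymm, Multiset.powersetCard_zero_left]

lemma esymm_cons (a : ℝ) (s : Multiset ℝ) (k : ℕ) :
    (a ::ₘ s).esymm (k + 1) = s.esymm (k + 1) + a * s.esymm k := by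
  rw [Multiset.esymm, Multiset.powersetCard_cons, Multiset.map_add, Multiset.sum_add,
    Multiset.map_map]
  congr 1
  rw [Multiset.esymm, ← Multiset.sum_map_mul_left]
  apply congrArg
  apply Multiset.map_congr rfl
  intro t _
  simp [Multiset.prod_cons]

lemma esymm_of_card_lt {s : Multiset ℝ} {k : ℕ} (h : Multiset.card s < k) : s.esymm k = 0 := by
  simp [Multiset.esymm, Multiset.powersetCard_eq_empty k h]

lemma esymm_card (s : Multiset ℝ) : s.esymm (Multiset.card s) = s.prod := by
  induction s using Multiset.induction_on with
  | empty => simp [esymm_zero']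
  | cons a s ih =>
    rw [Multiset.card_cons, esymm_cons, ih, esymm_of_card_lt (Nat.lt_succ_self _),
      Multiset.prod_cons]
    ring

lemma esymm_one' (s : Multiset ℝ) : s.esymm 1 = s.sum := by
  rw [Multiset.esymm, Multiset.powersetCard_one, Multiset.map_map]
  simp

lemma sum_sq_identity (s : Multiset ℝ) :
    s.sum ^ 2 = (s.map (· ^ 2)).sum + 2 * s.esymm 2 := by
  induction s using Multiset.induction_on with
  | empty => simp [esymm_of_card_lt (show Multiset.card (0 : Multiset ℝ) < 2 by simp)]
  | cons a s ih =>
    rw [Multiset.sum_cons, Multiset.map_cons, Multiset.sum_cons,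
      show (2 : ℕ) = 1 + 1 from rfl, esymm_cons, esymm_one']
    linear_combination ih

lemma expand_shift (a : ℝ) (s : Multiset ℝ) : (s.map (fun x => (x - a) ^ 2)).sum
    = (s.map (· ^ 2)).sum - 2 * a * s.sum + (Multiset.card s : ℝ) * a ^ 2 := by
  induction s using Multiset.induction_on with
  | empty => simp
  | cons b t iht =>
    simp only [Multiset.map_cons, Multiset.sum_cons, Multiset.card_cons]
    rw [iht]
    push_cast
    ring

lemma cauchy_multiset (s : Multiset ℝ) :
    s.sum ^ 2 ≤ (Multiset.card s : ℝ) * (s.map (· ^ 2)).sum := by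
  induction s using Multiset.induction_on with
  | empty => simp
  | cons a s ih =>
    have expand := expand_shift a s
    have key : 0 ≤ (s.map (fun x => (x - a) ^ 2)).sum := by
      apply Multiset.sum_nonneg
      intro x hx
      obtain ⟨y, -, rfl⟩ := Multiset.mem_map.mp hx
      positivity
    rw [expand] at key
    simp only [Multiset.sum_cons, Multiset.map_cons, Multiset.card_cons]
    push_cast
    nlinarith [key, ih]

lemma two_mul_choose_two (m : ℕ) : 2 * m.choose 2 = m * (m - 1) := by
  induction m with
  | zero => rfl
  | succ m ih =>
    rw [Nat.choose_succ_succ, Nat.mul_add, ih, Nat.choose_one_right, Nat.succ_sub_one]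
    cases m with
    | zero => rfl
    | succ m' => rw [Nat.succ_sub_one]; ring

lemma claim1 {m : ℕ} (hm : 2 ≤ m) (s : Multiset ℝ) (hc : Multiset.card s = m) :
    (m : ℝ) ^ 2 * s.esymm 2 ≤ (m.choose 2 : ℝ) * s.esymm 1 ^ 2 := by
  have hQ := sum_sq_identity s
  have hCS := cauchy_multiset s
  rw [hc] at hCS
  rw [esymm_one']
  have h2 : ((2 * m.choose 2 : ℕ) : ℝ) = (m : ℝ) * ((m : ℝ) - 1) := by
    rw [two_mul_choose_two]
    push_cast [Nat.cast_sub (by omega : 1 ≤ m)]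
    ring
  push_cast at h2
  have hm' : (2 : ℝ) ≤ (m : ℝ) := by exact_mod_cast hm
  nlinarith [mul_le_mul_of_nonneg_left hCS (by positivity : (0:ℝ) ≤ (m:ℝ))]

lemma inv_esymm : ∀ (s : Multiset ℝ), (∀ x ∈ s, x ≠ 0) → ∀ j, j ≤ Multiset.card s →
    (s.map (·⁻¹)).esymm j * s.prod = s.esymm (Multiset.card s - j) := by
  intro s
  induction s using Multiset.induction_on with
  | empty =>
    intro _ j hj
    have hj0 : j = 0 := by simpa using hj
    subst hj0
    simp [esymm_zero']
  | cons a s ih =>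
    intro h0 j hj
    have ha : a ≠ 0 := h0 a (Multiset.mem_cons_self a s)
    have h0' : ∀ x ∈ s, x ≠ 0 := fun x hx => h0 x (Multiset.mem_cons_of_mem hx)
    rw [Multiset.map_cons, Multiset.prod_cons, Multiset.card_cons]
    cases j with
    | zero =>
      have h := esymm_card (a ::ₘ s)
      rw [Multiset.card_cons, Multiset.prod_cons] at h
      rw [esymm_zero']
      simpa using h.symm
    | succ i =>
      rw [esymm_cons]
      rw [Multiset.card_cons] at hj
      by_cases hi : i + 1 ≤ Multiset.card s
      · have h1 := ih h0' (i + 1) hi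
        have h2 := ih h0' i (by omega)
        have hci : Multiset.card s - i = Multiset.card s - (i + 1) + 1 := by omega
        rw [hci] at h2
        rw [show Multiset.card s + 1 - (i + 1) = Multiset.card s - (i + 1) + 1 by omega,
          esymm_cons]
        linear_combination a * h1 + h2
          + ((Multiset.map (·⁻¹) s).esymm i * s.prod) * (inv_mul_cancel₀ ha)
      · have hie : i = Multiset.card s := by omega
        subst hie
        have h2 := ih h0' (Multiset.card s) le_rfl
        rw [Nat.sub_self, esymm_zero'] at h2
        rw [esymm_of_card_lt (show Multiset.card (Multiset.map (·⁻¹) s) < Multiset.card s + 1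
            by simp), Nat.sub_self, esymm_zero']
        linear_combination (a⁻¹ * a) * h2 + inv_mul_cancel₀ ha

lemma choose_id (m j : ℕ) (hj : j ≤ m) (hm : 1 ≤ m) :
    (m - j) * m.choose j = m * (m - 1).choose j := by
  have h1 : m.choose (j + 1) * (j + 1) = m.choose j * (m - j) := Nat.choose_succ_right_eq m j
  obtain ⟨m', rfl⟩ : ∃ m', m = m' + 1 := ⟨m - 1, by omega⟩
  have h2 : (m' + 1) * m'.choose j = (m' + 1).choose (j + 1) * (j + 1) :=
    Nat.add_one_mul_choose_eq m' j
  simp only [Nat.add_sub_cancel]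
  calc (m' + 1 - j) * (m' + 1).choose j = (m' + 1).choose j * (m' + 1 - j) := by ring
    _ = (m' + 1).choose (j + 1) * (j + 1) := h1.symm
    _ = (m' + 1) * m'.choose j := h2.symm

lemma choose_id_real (m j : ℕ) (hj : j ≤ m) (hm : 1 ≤ m) :
    ((m : ℝ) - j) * m.choose j = (m : ℝ) * (m - 1).choose j := by
  have := choose_id m j hj hm
  have hcast : ((m - j : ℕ) : ℝ) = (m : ℝ) - j := by
    push_cast [Nat.cast_sub hj]; ring
  calc ((m : ℝ) - j) * m.choose j = ((m - j : ℕ) : ℝ) * ((m.choose j : ℕ) : ℝ) := by rw [hcast]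
    _ = (((m - j) * m.choose j : ℕ) : ℝ) := by push_cast; ring
    _ = ((m * (m - 1).choose j : ℕ) : ℝ) := by rw [this]
    _ = (m : ℝ) * (m - 1).choose j := by push_cast; ring

lemma deriv_step (s : Multiset ℝ) (m : ℕ) (hc : Multiset.card s = m) (hm : 1 ≤ m) :
    ∃ t : Multiset ℝ, Multiset.card t = m - 1 ∧
      ∀ j ≤ m - 1, (m : ℝ) * t.esymm j = ((m : ℝ) - j) * s.esymm j := by
  set g : Polynomial ℝ := (s.map fun a => X - C a).prod with hg
  have hmonic : g.Monic :=
    monic_multiset_prod_of_monic _ _ (fun a _ => monic_X_sub_C a)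
  have hdeg : g.natDegree = m := by
    rw [hg, natDegree_multiset_prod_of_monic _ (by
      intro f hf
      obtain ⟨a, -, rfl⟩ := Multiset.mem_map.mp hf
      exact monic_X_sub_C a)]
    simp [Multiset.map_map, Function.comp_def, natDegree_X_sub_C, hc]
  have hroots : g.roots = s := roots_multiset_prod_X_sub_C s
  have hcoefftop : (derivative g).coeff (m - 1) = (m : ℝ) := by
    rw [coeff_derivative, show m - 1 + 1 = m by omega]
    rw [show g.coeff m = 1 from hdeg ▸ hmonic.coeff_natDegree]
    push_cast [Nat.cast_sub hm]
    ring
  have hmne : ((m : ℝ)) ≠ 0 := by positivity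
  have hne : (derivative g).coeff (m - 1) ≠ 0 := by rw [hcoefftop]; exact hmne
  have hdeg' : (derivative g).natDegree = m - 1 := by
    refine le_antisymm ?_ (le_natDegree_of_ne_zero hne)
    calc (derivative g).natDegree ≤ g.natDegree - 1 := natDegree_derivative_le g
      _ = m - 1 := by rw [hdeg]
  have hcard : Multiset.card (derivative g).roots = m - 1 := by
    have h1 : Multiset.card (derivative g).roots ≤ m - 1 := hdeg' ▸ (derivative g).card_roots'
    have h2 := g.card_roots_le_derivative
    rw [hroots, hc] at h2
    omega
  have hlead : (derivative g).leadingCoeff = (m : ℝ) := by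
    rw [Polynomial.leadingCoeff, hdeg', hcoefftop]
  refine ⟨(derivative g).roots, hcard, fun j hj => ?_⟩
  have h1 := Polynomial.coeff_eq_esymm_roots_of_card
    (p := derivative g) (hcard.trans hdeg'.symm) (k := m - 1 - j) (by omega)
  rw [hdeg', hlead, show m - 1 - (m - 1 - j) = j by omega] at h1
  have h2 : (derivative g).coeff (m - 1 - j) = g.coeff (m - j) * ((m - j : ℕ) : ℝ) := by
    rw [coeff_derivative, show m - 1 - j + 1 = m - j by omega]
    congr 1
    have h : m - 1 - j + 1 = m - j := by omega
    exact_mod_cast h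
  have h3 : g.coeff (m - j) = (-1 : ℝ) ^ j * s.esymm j := by
    have := Multiset.prod_X_sub_C_coeff s (k := m - j) (by omega : m - j ≤ Multiset.card s)
    rw [hc, show m - (m - j) = j by omega] at this
    rw [hg, this]
  have hcast : ((m - j : ℕ) : ℝ) = (m : ℝ) - j := by
    push_cast [Nat.cast_sub (by omega : j ≤ m)]; ring
  rw [h2, h3, hcast] at h1
  have hsgn : ((-1 : ℝ) ^ j) ≠ 0 := by positivity
  apply mul_left_cancel₀ hsgn
  linear_combination -h1

theorem newton : ∀ m : ℕ, ∀ s : Multiset ℝ, Multiset.card s = m → ∀ k : ℕ, 1 ≤ k → k + 1 ≤ m →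
    (m.choose k : ℝ) ^ 2 * (s.esymm (k - 1) * s.esymm (k + 1))
      ≤ (m.choose (k - 1) : ℝ) * (m.choose (k + 1) : ℝ) * s.esymm k ^ 2 := by
  intro m
  induction m using Nat.strong_induction_on with
  | _ m IH =>
    intro s hc k hk hkm
    by_cases hk1 : k = 1
    · subst hk1
      have h := claim1 (by omega) s hc
      simp only [Nat.sub_self, esymm_zero', Nat.choose_one_right, Nat.choose_zero_right]
      push_cast
      nlinarith [h]
    · -- k ≥ 2
      by_cases hkm2 : k + 1 = m
      · -- reversal case
        subst hkm2
        by_cases hzero : (0 : ℝ) ∈ s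
        · have hprod : s.esymm (k + 1) = 0 := by
            rw [← hc, esymm_card]
            exact Multiset.prod_eq_zero hzero
          rw [hprod]
          have : (((k+1).choose k : ℝ)) ^ 2 * (s.esymm (k - 1) * 0) = 0 := by ring
          rw [this]
          positivity
        · have h0 : ∀ x ∈ s, x ≠ 0 := fun x hx hx0 => hzero (hx0 ▸ hx)
          set t : Multiset ℝ := s.map (·⁻¹) with ht
          have hct : Multiset.card t = k + 1 := by rw [ht, Multiset.card_map, hc]
          have hcl := claim1 (by omega) t hct
          have hi1 := inv_esymm s h0 1 (by omega)
          have hi2 := inv_esymm s h0 2 (by omega)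
          rw [hc] at hi1 hi2
          have hP : s.esymm (k + 1) = s.prod := by rw [← hc, esymm_card]
          have hsq : (0:ℝ) ≤ s.prod ^ 2 := sq_nonneg _
          have key := mul_le_mul_of_nonneg_right hcl hsq
          have e1 : (((k+1):ℕ) : ℝ) ^ 2 * t.esymm 2 * s.prod ^ 2
              = ((k+1 : ℕ) : ℝ) ^ 2 * (t.esymm 2 * s.prod) * s.prod := by ring
          have e2 : ((k+1).choose 2 : ℝ) * t.esymm 1 ^ 2 * s.prod ^ 2
              = ((k+1).choose 2 : ℝ) * (t.esymm 1 * s.prod) ^ 2 := by ring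
          rw [e1, e2, hi1, hi2] at key
          -- key : (k+1)^2 * esymm s (k+1-2) * prod ≤ C(k+1,2) * esymm s (k+1-1) ^2
          rw [show k + 1 - 2 = k - 1 by omega, show k + 1 - 1 = k from rfl] at key
          have hch1 : (k+1).choose k = k + 1 := Nat.choose_succ_self_right k
          have hch2 : (k+1).choose (k+1) = 1 := Nat.choose_self (k+1)
          have hch3 : (k+1).choose (k-1) = (k+1).choose 2 := by
            rw [show k - 1 = (k + 1) - 2 by omega, Nat.choose_symm (by omega)]
          rw [hch1, hch2, hch3, hP]
          push_cast at key ⊢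
          nlinarith [key]
      · -- derivative case : k + 2 ≤ m
        have hm1 : 1 ≤ m := by omega
        obtain ⟨t, hct, hrel⟩ := deriv_step s m hc hm1
        have hIH := IH (m - 1) (by omega) t hct k hk (by omega)
        set a := s.esymm (k - 1)
        set b := s.esymm k
        set c := s.esymm (k + 1)
        set a' := t.esymm (k - 1)
        set b' := t.esymm k
        set c' := t.esymm (k + 1)
        have hja := hrel (k - 1) (by omega)
        have hjb := hrel k (by omega)
        have hjc := hrel (k + 1) (by omega)
        have hcast1 : (((k - 1 : ℕ)) : ℝ) = (k : ℝ) - 1 := by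
          push_cast [Nat.cast_sub hk]; ring
        rw [hcast1] at hja
        have hA := choose_id_real m (k - 1) (by omega) hm1
        have hB := choose_id_real m k (by omega) hm1
        have hC := choose_id_real m (k + 1) (by omega) hm1
        rw [hcast1] at hA
        set A := (m.choose (k - 1) : ℝ)
        set B := (m.choose k : ℝ)
        set Cc := (m.choose (k + 1) : ℝ)
        set A' := ((m - 1).choose (k - 1) : ℝ)
        set B' := ((m - 1).choose k : ℝ)
        set C' := ((m - 1).choose (k + 1) : ℝ)
        -- hA : (m - (k-1)) * A = m * A' etc；hja : m * a' = (m - (k-1)) * a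
        set u : ℝ := ((m : ℝ) - ((k : ℝ) - 1)) * ((m : ℝ) - ((k : ℝ) + 1)) * ((m : ℝ) - k) ^ 2
          with hu
        have hupos : 0 < u := by
          have h1 : (k : ℝ) + 1 < (m : ℝ) := by exact_mod_cast (by omega : k + 1 < m)
          have e1 : (0:ℝ) < (m : ℝ) - ((k:ℝ) - 1) := by linarith
          have e2 : (0:ℝ) < (m : ℝ) - ((k:ℝ) + 1) := by linarith
          have e3 : (0:ℝ) < (m : ℝ) - (k:ℝ) := by linarith
          rw [hu]
          exact mul_pos (mul_pos e1 e2) (pow_pos e3 2)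
        have hk1' : ((k:ℝ) + 1 : ℝ) = (((k+1 : ℕ)) : ℝ) := by push_cast; ring
        rw [← hk1'] at hjc hC
        have main : u * (B ^ 2 * (a * c)) ≤ u * (A * Cc * b ^ 2) := by
          calc u * (B ^ 2 * (a * c))
              = (((m:ℝ) - k) * B) ^ 2 * ((((m:ℝ) - ((k:ℝ)-1)) * a) * (((m:ℝ) - ((k:ℝ)+1)) * c))
                := by rw [hu]; ring
            _ = ((m:ℝ) * B') ^ 2 * (((m:ℝ) * a') * ((m:ℝ) * c')) := by rw [hB, ← hja, ← hjc]
            _ = (m:ℝ) ^ 4 * (B' ^ 2 * (a' * c')) := by ring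
            _ ≤ (m:ℝ) ^ 4 * (A' * C' * b' ^ 2) := by
                apply mul_le_mul_of_nonneg_left hIH (by positivity)
            _ = ((m:ℝ) * A') * ((m:ℝ) * C') * ((m:ℝ) * b') ^ 2 := by ring
            _ = (((m:ℝ) - ((k:ℝ)-1)) * A) * ((((m:ℝ) - ((k:ℝ)+1))) * Cc)
                * ((((m:ℝ) - k)) * b) ^ 2 := by rw [← hA, ← hC, hjb]
            _ = u * (A * Cc * b ^ 2) := by rw [hu]; ring
        exact le_of_mul_le_mul_left main hupos

lemma choose_log_concave {m k : ℕ} (hk : 1 ≤ k) (hkm : k + 1 ≤ m) :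
    m.choose (k - 1) * m.choose (k + 1) ≤ m.choose k ^ 2 := by
  obtain ⟨k', rfl⟩ : ∃ k', k = k' + 1 := ⟨k - 1, by omega⟩
  have h1 : m.choose (k' + 1 + 1) * (k' + 1 + 1) = m.choose (k' + 1) * (m - (k' + 1)) :=
    Nat.choose_succ_right_eq m (k' + 1)
  have h2 : m.choose (k' + 1) * (k' + 1) = m.choose k' * (m - k') :=
    Nat.choose_succ_right_eq m k'
  simp only [Nat.add_sub_cancel]
  have key : m.choose k' * m.choose (k' + 2) * ((k' + 2) * (m - k'))
      = m.choose (k' + 1) ^ 2 * ((k' + 1) * (m - (k' + 1))) := by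
    calc m.choose k' * m.choose (k' + 2) * ((k' + 2) * (m - k'))
        = (m.choose (k' + 2) * (k' + 2)) * (m.choose k' * (m - k')) := by ring
      _ = (m.choose (k' + 1) * (m - (k' + 1))) * (m.choose (k' + 1) * (k' + 1)) := by
          rw [show k' + 2 = k' + 1 + 1 from rfl, h1, h2]
      _ = m.choose (k' + 1) ^ 2 * ((k' + 1) * (m - (k' + 1))) := by ring
  have hle : (k' + 1) * (m - (k' + 1)) ≤ (k' + 2) * (m - k') :=
    Nat.mul_le_mul (by omega) (by omega)
  have hpos : 0 < (k' + 2) * (m - k') := by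
    have : k' + 2 ≤ m := hkm
    exact Nat.mul_pos (by omega) (by omega)
  refine Nat.le_of_mul_le_mul_right ?_ hpos
  calc m.choose k' * m.choose (k' + 2) * ((k' + 2) * (m - k'))
      = m.choose (k' + 1) ^ 2 * ((k' + 1) * (m - (k' + 1))) := key
    _ ≤ m.choose (k' + 1) ^ 2 * ((k' + 2) * (m - k')) := Nat.mul_le_mul_left _ hle

lemma esymmR_eq {n : ℕ} (lam : Fin n → ℝ) (j : ℕ) :
    esymmR (j : ℤ) lam = (Finset.univ.val.map lam).esymm j := by
  rw [esymmR, sigmaOn, if_pos (by positivity), Finset.esymm_map_val, Int.toNat_natCast]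

lemma Sfun_eq {n : ℕ} (α : ℝ) (lam : Fin n → ℝ) (j : ℕ) :
    Sfun α (j : ℤ) lam = (α ::ₘ Finset.univ.val.map lam).esymm j := by
  cases j with
  | zero =>
    rw [Sfun, esymm_zero']
    have h1 : esymmR (0 : ℤ) lam = 1 := by
      rw [esymmR, sigmaOn, if_pos le_rfl]
      simp
    have h2 : esymmR ((0 : ℤ) - 1) lam = 0 := by
      rw [esymmR, sigmaOn, if_neg (by norm_num)]
    simp only [Nat.cast_zero]
    rw [h1, h2]
    ring
  | succ i =>
    rw [Sfun, esymm_cons]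
    have h1 : esymmR ((i + 1 : ℕ) : ℤ) lam = (Finset.univ.val.map lam).esymm (i + 1) :=
      esymmR_eq lam (i + 1)
    have h2 : (((i + 1 : ℕ) : ℤ) - 1) = (i : ℤ) := by push_cast; ring
    rw [h2, h1, esymmR_eq lam i]

end SkNewtonAux

open SkNewtonAux in
/-- **Newton-type inequality for `S_k`** (Lemma 2.3 (c)): for every `λ ∈ Γ̃_k`,
`S_k(λ)² - S_{k-1}(λ) S_{k+1}(λ) ≥ 0`. -/
theorem Sk_newton_inequality
    {n k : ℕ} (hk : 1 ≤ k) (hkn : k ≤ n) (α : ℝ) (hα : 0 < α) :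
    ∀ lam ∈ GammaTilde n k α,
      0 ≤ (Sfun α (k : ℤ) lam) ^ 2 - Sfun α ((k : ℤ) - 1) lam * Sfun α ((k : ℤ) + 1) lam := by

  intro lam _
  set μ : Multiset ℝ := α ::ₘ Finset.univ.val.map lam with hμ
  have hcard : Multiset.card μ = n + 1 := by
    rw [hμ, Multiset.card_cons, Multiset.card_map]
    simp
  have e0 : Sfun α (k : ℤ) lam = μ.esymm k := Sfun_eq α lam k
  have e1 : Sfun α ((k : ℤ) - 1) lam = μ.esymm (k - 1) := by
    have : ((k : ℤ) - 1) = ((k - 1 : ℕ) : ℤ) := by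
      push_cast [Nat.cast_sub hk]; ring
    rw [this, Sfun_eq α lam (k - 1)]
  have e2 : Sfun α ((k : ℤ) + 1) lam = μ.esymm (k + 1) := by
    have : ((k : ℤ) + 1) = ((k + 1 : ℕ) : ℤ) := by push_cast; ring
    rw [this, Sfun_eq α lam (k + 1)]
  rw [e0, e1, e2]
  have hnewton := newton (n + 1) μ hcard k hk (by omega)
  have hlc : ((n+1).choose (k - 1) * (n+1).choose (k + 1) : ℝ) ≤ ((n+1).choose k : ℝ) ^ 2 := by
    have := choose_log_concave (m := n + 1) hk (by omega)
    calc ((n+1).choose (k - 1) * (n+1).choose (k + 1) : ℝ)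
        = (((n+1).choose (k - 1) * (n+1).choose (k + 1) : ℕ) : ℝ) := by push_cast; ring
      _ ≤ (((n+1).choose k ^ 2 : ℕ) : ℝ) := by exact_mod_cast this
      _ = ((n+1).choose k : ℝ) ^ 2 := by push_cast; ring
  have hBpos : (0:ℝ) < ((n+1).choose k : ℝ) := by
    exact_mod_cast Nat.choose_pos (show k ≤ n + 1 by omega)
  set B := ((n+1).choose k : ℝ)
  set a := μ.esymm (k - 1)
  set b := μ.esymm k
  set c := μ.esymm (k + 1)
  by_cases hac : a * c ≤ 0
  · nlinarith [sq_nonneg b]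
  · push_neg at hac
    have step : B ^ 2 * (a * c) ≤ B ^ 2 * b ^ 2 := by
      calc B ^ 2 * (a * c) ≤ ((n+1).choose (k-1) : ℝ) * ((n+1).choose (k+1) : ℝ) * b ^ 2 :=
            hnewton
        _ ≤ B ^ 2 * b ^ 2 := by
            have hb2 : (0:ℝ) ≤ b ^ 2 := sq_nonneg b
            have : ((n+1).choose (k-1) : ℝ) * ((n+1).choose (k+1) : ℝ) ≤ B ^ 2 := by
              calc ((n+1).choose (k-1) : ℝ) * ((n+1).choose (k+1) : ℝ)
                  = ((n+1).choose (k - 1) * (n+1).choose (k + 1) : ℝ) := by push_cast; ring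
                _ ≤ B ^ 2 := hlc
            exact mul_le_mul_of_nonneg_right this hb2
    have := le_of_mul_le_mul_left (by linarith [step] : B ^ 2 * (a * c) ≤ B ^ 2 * (b ^ 2))
      (by positivity : (0:ℝ) < B ^ 2)
    linarith
end
end

section
/- Let 2 ≤ k ≤ n, α > 0 and N₀ > 0. There exists a constant c₀ > 0 depending only on n, k, α and N₀ such that every λ ∈ Γ_{k−1} with σ_k(λ) + α σ_{k−1}(λ) ≥ N₀ satisfies σ_{k−1}(λ) ≥ c₀. -/
open scoped BigOperators

noncomputable section

/-! If `σ_{k-1}(λ) ≥ C(n, k-1)` we are done. Otherwise, by Newton's inequalities the sequence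
`E_j = j! (n-j)! σ_j(λ)` is log-concave, and `E_{k-1} < E_0 = n!`; an increase `E_{k-1} < E_k`
would propagate back to `E_0 < E_1 < ⋯ < E_{k-1}`, so `E_k ≤ E_{k-1}`, i.e.
`k σ_k ≤ (n-k+1) σ_{k-1}`. Hence `N₀ ≤ σ_k + α σ_{k-1} ≤ (n + α) σ_{k-1}`.
Newton's inequalities follow from Rolle's theorem: derivatives and reversals of the real-rooted
polynomial `∏ (X + λ_i)` stay real-rooted. -/

open scoped Nat

namespace Polynomial

theorem Splits.reverse {K : Type*} [DivisionRing K] {f : K[X]} (hf : f.Splits) :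
    f.reverse.Splits := by
  induction hf using Submonoid.closure_induction with
  | mem p hp =>
    obtain ⟨a, rfl⟩ | ⟨a, rfl⟩ := hp
    · simp
    · exact .of_natDegree_le_one ((reverse_natDegree_le _).trans (natDegree_X_add_C a).le)
  | one => rw [← C_1, reverse_C]; exact Splits.C 1
  | mul f g _ _ hf hg => rw [reverse_mul_of_domain]; exact hf.mul hg

theorem Splits.derivative_of_real {p : ℝ[X]} (hp : p.Splits) : (derivative p).Splits := by
  rw [splits_iff_card_roots] at hp ⊢
  have := p.card_roots_le_derivative
  have := natDegree_derivative_le p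
  have := (derivative p).card_roots'
  omega

theorem Splits.iterate_derivative_of_real {p : ℝ[X]} (hp : p.Splits) (k : ℕ) :
    (derivative^[k] p).Splits := by
  induction k with
  | zero => exact hp
  | succ k ih => rw [Function.iterate_succ_apply']; exact ih.derivative_of_real

theorem factorial_mul_coeff_iterate_derivative {R : Type*} [CommSemiring R] (p : R[X])
    (k l : ℕ) :
    (l ! : R) * (derivative^[k] p).coeff l = ((l + k)! : R) * p.coeff (l + k) := by
  rw [coeff_iterate_derivative, nsmul_eq_mul, ← mul_assoc, ← Nat.cast_mul,
    ← Nat.factorial_mul_descFactorial (Nat.le_add_left k l), Nat.add_sub_cancel]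

theorem natDegree_iterate_derivative_eq {R : Type*} [CommSemiring R] [NoZeroDivisors R]
    [CharZero R] (p : R[X]) (k : ℕ) : (derivative^[k] p).natDegree = p.natDegree - k := by
  refine le_antisymm (natDegree_iterate_derivative p k) ?_
  rcases le_or_gt p.natDegree k with h | h
  · omega
  refine le_natDegree_of_ne_zero fun h0 => ?_
  have hlead := factorial_mul_coeff_iterate_derivative p k (p.natDegree - k)
  rw [h0, mul_zero, Nat.sub_add_cancel h.le, coeff_natDegree] at hlead
  have hp0 : p ≠ 0 := by rintro rfl; simp at h
  simp [Nat.factorial_ne_zero, hp0] at hlead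

theorem natDegree_finset_prod_X_add_C {R ι : Type*} [CommSemiring R] [Nontrivial R]
    (s : Finset ι) (f : ι → R) : (∏ i ∈ s, (X + C (f i))).natDegree = s.card := by
  rw [natDegree_prod_of_monic _ _ fun i _ => monic_X_add_C (f i)]
  simp

theorem Splits.discrim_nonneg {K : Type*} [Field K] [LinearOrder K] [IsStrictOrderedRing K]
    {p : K[X]} (hp : p.Splits) (hdeg : p.natDegree ≤ 2) :
    0 ≤ discrim (p.coeff 2) (p.coeff 1) (p.coeff 0) := by
  by_cases h2 : p.coeff 2 = 0
  · simp [discrim, h2, sq_nonneg]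
  have hdeg2 : p.natDegree = 2 := le_antisymm hdeg (le_natDegree_of_ne_zero h2)
  obtain ⟨x, hx⟩ := hp.exists_eval_eq_zero fun h => by
    simp [natDegree_eq_of_degree_eq_some h] at hdeg2
  rw [eval_eq_sum_range, hdeg2] at hx
  simp only [Finset.sum_range_succ, Finset.sum_range_zero] at hx
  rw [discrim_eq_sq_of_quadratic_eq_zero (x := x) (by linear_combination hx)]
  exact sq_nonneg _

/-- Differentiating `i` times, reversing and differentiating again leaves a real-rooted quadratic
whose discriminant is this inequality. -/
theorem Splits.newton_inequality_coeff {p : ℝ[X]} (hp : p.Splits) {i : ℕ}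
    (hi : i + 2 ≤ p.natDegree) :
    (i ! * (p.natDegree - i)! * p.coeff i) *
        ((i + 2)! * (p.natDegree - (i + 2))! * p.coeff (i + 2)) ≤
      ((i + 1)! * (p.natDegree - (i + 1))! * p.coeff (i + 1)) ^ 2 := by
  obtain ⟨d, hd⟩ : ∃ d, p.natDegree = i + 2 + d := Nat.exists_eq_add_of_le hi
  rw [hd, show i + 2 + d - i = d + 2 by omega, show i + 2 + d - (i + 1) = d + 1 by omega,
    show i + 2 + d - (i + 2) = d by omega]
  set q := derivative^[i] p
  have hq_coeff (l : ℕ) : (l ! : ℝ) * q.coeff l = ((l + i)! : ℝ) * p.coeff (l + i) :=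
    factorial_mul_coeff_iterate_derivative p i l
  have hq_deg : q.natDegree = d + 2 := by
    rw [natDegree_iterate_derivative_eq, hd]; omega
  set r := derivative^[d] q.reverse
  have hr_coeff (l : ℕ) (hl : l ≤ 2) :
      (l ! : ℝ) * r.coeff l = ((l + d)! : ℝ) * q.coeff (2 - l) := by
    rw [factorial_mul_coeff_iterate_derivative, coeff_reverse, hq_deg, revAt_le (by omega)]
    congr 2
    omega
  have hr_deg : r.natDegree ≤ 2 :=
    (natDegree_iterate_derivative _ d).trans (by have := reverse_natDegree_le q; omega)
  have hdisc : 0 ≤ discrim (r.coeff 2) (r.coeff 1) (r.coeff 0) :=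
    ((hp.iterate_derivative_of_real i).reverse.iterate_derivative_of_real d).discrim_nonneg hr_deg
  have r0 : r.coeff 0 = d ! * q.coeff 2 := by simpa using hr_coeff 0 (by norm_num)
  have r1 : r.coeff 1 = (d + 1)! * q.coeff 1 := by
    simpa [add_comm] using hr_coeff 1 (by norm_num)
  have r2 : 2 * r.coeff 2 = (d + 2)! * q.coeff 0 := by simpa [add_comm] using hr_coeff 2 le_rfl
  have q0 : q.coeff 0 = i ! * p.coeff i := by simpa using hq_coeff 0
  have q1 : q.coeff 1 = (i + 1)! * p.coeff (i + 1) := by simpa [add_comm] using hq_coeff 1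
  have q2 : 2 * q.coeff 2 = (i + 2)! * p.coeff (i + 2) := by simpa [add_comm] using hq_coeff 2
  calc
    _ = (2 * r.coeff 2) * (2 * r.coeff 0) := by
      rw [r2, r0, q0]; linear_combination (-(i ! * (d + 2)! * d ! * p.coeff i : ℝ)) * q2
    _ ≤ r.coeff 1 ^ 2 := by rw [discrim] at hdisc; linarith
    _ = _ := by rw [r1, q1]; ring

end Polynomial

open Polynomial Finset

section Esymm

variable {n : ℕ}

theorem esymmR_natCast_s12 (j : ℕ) (lam : Fin n → ℝ) :
    esymmR (j : ℤ) lam = ∑ s ∈ univ.powersetCard j, ∏ i ∈ s, lam i := by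
  simp [esymmR, sigmaOn]

theorem esymmR_zero (lam : Fin n → ℝ) : esymmR 0 lam = 1 := by
  simpa using esymmR_natCast_s12 0 lam

theorem coeff_prod_X_add_C_eq_esymmR (lam : Fin n → ℝ) {l : ℕ} (hl : l ≤ n) :
    (∏ i, (X + C (lam i))).coeff l = esymmR ((n - l : ℕ) : ℤ) lam := by
  rw [Finset.prod_X_add_C_coeff _ _ (by simpa using hl), esymmR_natCast_s12, card_univ,
    Fintype.card_fin]

/-- `j! (n - j)! σ_j(λ) = n! σ_j(λ) / C(n, j)`, the normalisation in which Newton's inequalities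
are log-concavity. -/
def scaledEsymm (lam : Fin n → ℝ) (j : ℕ) : ℝ :=
  (j ! * (n - j)! : ℝ) * esymmR (j : ℤ) lam

theorem scaledEsymm_mul_le_sq (lam : Fin n → ℝ) {j : ℕ} (hj : j + 2 ≤ n) :
    scaledEsymm lam j * scaledEsymm lam (j + 2) ≤ scaledEsymm lam (j + 1) ^ 2 := by
  obtain ⟨i, rfl⟩ : ∃ i, n = i + 2 + j := ⟨n - (j + 2), by omega⟩
  have hnewton := (Splits.prod fun i _ => Splits.X_add_C (lam i)).newton_inequality_coeff
    (i := i) (by rw [natDegree_finset_prod_X_add_C, card_fin]; omega)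
  rw [natDegree_finset_prod_X_add_C, card_fin, coeff_prod_X_add_C_eq_esymmR _ (by omega),
    coeff_prod_X_add_C_eq_esymmR _ (by omega),
    coeff_prod_X_add_C_eq_esymmR _ (by omega)] at hnewton
  simp only [scaledEsymm, show i + 2 + j - i = j + 2 by omega,
    show i + 2 + j - (i + 1) = j + 1 by omega, show i + 2 + j - (i + 2) = j by omega,
    show i + 2 + j - j = i + 2 by omega, show i + 2 + j - (j + 1) = i + 1 by omega,
    show i + 2 + j - (j + 2) = i by omega] at hnewton ⊢
  linarith

end Esymm

theorem apply_lt_apply_succ_of_mul_le_sq {E : ℕ → ℝ} {K : ℕ}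
    (hpos : ∀ i ≤ K + 1, 0 < E i)
    (hlc : ∀ i, i + 2 ≤ K + 1 → E i * E (i + 2) ≤ E (i + 1) ^ 2) (hK : E K < E (K + 1))
    {i : ℕ} (hi : i ≤ K) : E i < E (i + 1) := by
  induction hi using Nat.decreasingInduction with
  | self => exact hK
  | of_succ m hm ih =>
    have := hlc m (by omega)
    have := hpos m (by omega)
    have := hpos (m + 1) (by omega)
    nlinarith

theorem apply_succ_le_apply_of_mul_le_sq {E : ℕ → ℝ} {K : ℕ} (hK : 1 ≤ K)
    (hpos : ∀ i ≤ K + 1, 0 < E i)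
    (hlc : ∀ i, i + 2 ≤ K + 1 → E i * E (i + 2) ≤ E (i + 1) ^ 2) (h0 : E K ≤ E 0) :
    E (K + 1) ≤ E K := by
  by_contra! hlt
  have hmono : StrictMonoOn E (Set.Iic K) :=
    strictMonoOn_Iic_of_lt_succ fun m hm => by
      simpa using apply_lt_apply_succ_of_mul_le_sq hpos hlc hlt hm.le
  have := hmono (Set.mem_Iic.2 (Nat.zero_le K)) (Set.mem_Iic.2 le_rfl) (by omega)
  linarith

theorem succ_mul_esymmR_le_of_lt_choose {n K : ℕ} (hKn : K + 1 ≤ n) {lam : Fin n → ℝ}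
    (hlam : lam ∈ GammaCone n K) (hsmall : esymmR (K : ℤ) lam < n.choose K) :
    (K + 1 : ℝ) * esymmR ((K : ℤ) + 1) lam ≤ (n - K : ℝ) * esymmR (K : ℤ) lam := by
  rcases Nat.eq_zero_or_pos K with rfl | hK
  · simp [esymmR_zero] at hsmall
  have hσK : 0 < esymmR (K : ℤ) lam := hlam K hK le_rfl
  rcases le_or_gt (esymmR ((K : ℤ) + 1) lam) 0 with hneg | hσK1
  · have : (0 : ℝ) ≤ n - K := by rw [sub_nonneg]; exact_mod_cast (by omega : K ≤ n)
    nlinarith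
  have hpos : ∀ i ≤ K + 1, 0 < scaledEsymm lam i := by
    intro i hi
    refine mul_pos (by positivity) ?_
    rcases i.eq_zero_or_pos with rfl | hi0
    · simp [esymmR_zero]
    rcases hi.lt_or_eq with hi | rfl
    · exact hlam i hi0 (by omega)
    · exact_mod_cast hσK1
  have h0 : scaledEsymm lam K ≤ scaledEsymm lam 0 := by
    have hchoose : (n.choose K * K ! * (n - K)! : ℝ) = n ! := by
      exact_mod_cast Nat.choose_mul_factorial_mul_factorial (by omega : K ≤ n)
    calc scaledEsymm lam K ≤ (K ! * (n - K)! : ℝ) * n.choose K :=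
          mul_le_mul_of_nonneg_left hsmall.le (by positivity)
      _ = scaledEsymm lam 0 := by
          simp only [scaledEsymm, Nat.cast_zero, esymmR_zero, Nat.factorial_zero, Nat.sub_zero]
          linear_combination hchoose
  have hstep := apply_succ_le_apply_of_mul_le_sq hK hpos
    (fun i hi => scaledEsymm_mul_le_sq lam (by omega)) h0
  simp only [scaledEsymm] at hstep
  rw [Nat.factorial_succ, show n - K = n - (K + 1) + 1 by omega, Nat.factorial_succ] at hstep
  push_cast [Nat.cast_sub hKn] at hstep ⊢
  refine le_of_mul_le_mul_left ?_ (by positivity : (0 : ℝ) < K ! * (n - (K + 1))!)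
  linarith

/-- **Lower bound for `σ_{k-1}`** (Lemma 2.5 (a)): there is `c₀ > 0`
(depending on `n, k, α, N₀`) such that every `λ ∈ Γ_{k-1}` with
`σ_k(λ) + α σ_{k-1}(λ) ≥ N₀` satisfies `σ_{k-1}(λ) ≥ c₀`. -/
theorem sigma_km1_lower_bound
    {n k : ℕ} (hk : 2 ≤ k) (hkn : k ≤ n) (α N₀ : ℝ) (hα : 0 < α) (hN₀ : 0 < N₀) :
    ∃ c₀ : ℝ, 0 < c₀ ∧
      ∀ lam ∈ GammaCone n (k - 1),
        N₀ ≤ Sfun α (k : ℤ) lam → c₀ ≤ esymmR ((k : ℤ) - 1) lam := by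
  obtain ⟨K, rfl⟩ : ∃ K, k = K + 1 := ⟨k - 1, by omega⟩
  have hchoose : (0 : ℝ) < n.choose K := by exact_mod_cast Nat.choose_pos (by omega)
  refine ⟨min (n.choose K) (N₀ / (n + α)), lt_min hchoose (by positivity),
    fun lam hlam hS => ?_⟩
  rw [Nat.add_sub_cancel] at hlam
  simp only [Sfun, Nat.cast_succ, add_sub_cancel_right] at hS ⊢
  rcases le_or_gt (n.choose K : ℝ) (esymmR K lam) with hbig | hsmall
  · exact (min_le_left _ _).trans hbig
  have hσK : 0 < esymmR K lam := hlam K (by omega) le_rfl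
  have hnewton := succ_mul_esymmR_le_of_lt_choose (by omega) hlam hsmall
  refine (min_le_right _ _).trans ((div_le_iff₀ (by positivity)).2 ?_)
  have hK : (0 : ℝ) ≤ K := K.cast_nonneg
  have hσ : esymmR ((K : ℤ) + 1) lam ≤ n * esymmR K lam := by
    rcases le_or_gt (esymmR ((K : ℤ) + 1) lam) 0 with h | h <;> nlinarith
  linarith
end
end

section
/- Let 2 ≤ k ≤ n, α > 0, N₁ > 0 and K₀ > 0. There exist constants c₀ > 0 (depending only on n, k, N₁) and Λ > 0 (depending on n, k, α, N₁, K₀) such that every λ ∈ Γ_{k−1} with λ₁ ≥ λ₂ ≥ ⋯ ≥ λ_n, λ₁ ≥ Λ, σ_k(λ) + α σ_{k−1}(λ) ≤ N₁, and λ_n ≥ −K₀ satisfies |λ_k| ≤ c₀ K₀. -/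
open scoped BigOperators

noncomputable section

/-- A strictly monotone map `Fin k → Fin n` satisfies `m ≤ f m` on values. -/
lemma aux_strictMono_fin_le {k n : ℕ} (f : Fin k → Fin n) (hf : StrictMono f) (m : Fin k) :
    (m : ℕ) ≤ (f m : ℕ) := by
  have H : ∀ p : ℕ, ∀ m : Fin k, m.val = p → p ≤ (f m).val := by
    intro p
    induction p with
    | zero => intro m _; exact Nat.zero_le _
    | succ q ih =>
      intro m hm
      have hq : q < k := by omega
      have h1 : f ⟨q, hq⟩ < f m := hf (by simp [Fin.lt_def, hm])
      have h2 := ih ⟨q, hq⟩ rfl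
      have h3 := Fin.lt_def.mp h1
      omega
  exact H _ m rfl

/-- A product over a `k`-element finset equals the product over `Fin k` via
`orderEmbOfFin`. -/
lemma aux_prod_orderEmbOfFin {n k : ℕ} (s : Finset (Fin n)) (hs : s.card = k)
    (lam : Fin n → ℝ) :
    ∏ i ∈ s, lam i = ∏ m : Fin k, lam (s.orderEmbOfFin hs m) := by
  have hset : s = Finset.univ.map (s.orderEmbOfFin hs).toEmbedding := by
    ext i
    simp only [Finset.mem_map, Finset.mem_univ, true_and]
    constructor
    · intro hi
      have : i ∈ Set.range (s.orderEmbOfFin hs) := by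
        rw [Finset.range_orderEmbOfFin]; exact hi
      exact this
    · rintro ⟨m, rfl⟩
      exact Finset.orderEmbOfFin_mem s hs m
  conv_lhs => rw [hset]
  rw [Finset.prod_map]
  rfl

/-- **Bound on `λ_k`** (Lemma 2.5 (b)): there are `c₀ > 0` (depending on `n, k, N₁`)
and `Λ > 0` such that every ordered `λ ∈ Γ_{k-1}` with `λ₁ ≥ Λ`,
`σ_k(λ) + α σ_{k-1}(λ) ≤ N₁` and `λ_n ≥ -K₀` satisfies `|λ_k| ≤ c₀ K₀`.
(Indices are `1`-based in the informal statement; here `λ_j` is `lam ⟨j-1,_⟩`.) -/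
theorem lambda_k_bound
    {n k : ℕ} (hk : 2 ≤ k) (hkn : k ≤ n) (α N₁ K₀ : ℝ)
    (hα : 0 < α) (hN₁ : 0 < N₁) (hK₀ : 0 < K₀) :
    ∃ c₀ Λ : ℝ, 0 < c₀ ∧ 0 < Λ ∧
      ∀ lam ∈ GammaCone n (k - 1),
        (∀ i j : Fin n, i ≤ j → lam j ≤ lam i) →
        Λ ≤ lam ⟨0, by omega⟩ →
        Sfun α (k : ℤ) lam ≤ N₁ →
        -K₀ ≤ lam ⟨n - 1, by omega⟩ →
        |lam ⟨k - 1, by omega⟩| ≤ c₀ * K₀ := by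
  have hCpos : 0 < n.choose k := Nat.choose_pos hkn
  set C : ℝ := (n.choose k : ℝ) with hCdef
  have hC1 : (1 : ℝ) ≤ C := by rw [hCdef]; exact_mod_cast hCpos
  set c₀ : ℝ := 2 * C with hc₀def
  have hc₀pos : (0 : ℝ) < c₀ := by linarith
  have hc₀1 : (1 : ℝ) ≤ c₀ := by linarith
  set Λ : ℝ := (2 * (N₁ + 1)) / (c₀ * K₀) ^ (k - 1) with hΛdef
  have hpowpos : (0 : ℝ) < (c₀ * K₀) ^ (k - 1) := by positivity
  have hΛpos : 0 < Λ := by positivity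
  refine ⟨c₀, Λ, hc₀pos, hΛpos, ?_⟩
  intro lam hGam ord hlam1 hS hlamn
  by_contra hcon
  push_neg at hcon
  -- all entries are bounded below by -K₀
  have hlow : ∀ i : Fin n, -K₀ ≤ lam i := by
    intro i
    refine le_trans hlamn (ord i ⟨n - 1, by omega⟩ ?_)
    rw [Fin.le_def]
    have := i.isLt
    simp only []
    omega
  have hkidx : k - 1 < n := by omega
  set lk : ℝ := lam ⟨k - 1, hkidx⟩ with hlkdef
  have hbig : c₀ * K₀ < lk := by
    rcases abs_cases lk with ⟨h1, _⟩ | ⟨h1, h2⟩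
    · rw [← h1]; exact hcon
    · exfalso
      have h3 := hlow ⟨k - 1, hkidx⟩
      rw [← hlkdef] at h3
      rw [h1] at hcon
      nlinarith
  -- the "top" entries
  set μ : Fin k → ℝ := fun m => lam (Fin.castLE hkn m) with hμdef
  have hμ_ge : ∀ m : Fin k, lk ≤ μ m := by
    intro m
    refine ord (Fin.castLE hkn m) ⟨k - 1, hkidx⟩ ?_
    rw [Fin.le_def]
    have := m.isLt
    simp only [Fin.coe_castLE]
    omega
  have hμpos : ∀ m : Fin k, 0 < μ m := by
    intro m
    have := hμ_ge m
    nlinarith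
  set P : ℝ := ∏ m : Fin k, μ m with hPdef
  have hPpos : 0 < P := Finset.prod_pos (fun m _ => hμpos m)
  -- key: every k-subset product is bounded below by -(P/c₀)
  have key : ∀ s : Finset (Fin n), s.card = k → -(P / c₀) ≤ ∏ i ∈ s, lam i := by
    intro s hs
    by_cases hposall : ∀ i ∈ s, 0 ≤ lam i
    · have h0 : 0 ≤ ∏ i ∈ s, lam i := Finset.prod_nonneg hposall
      have h1 : 0 ≤ P / c₀ := by positivity
      linarith
    · push_neg at hposall
      obtain ⟨i₀, hi₀s, hi₀⟩ := hposall
      set f := s.orderEmbOfFin hs with hfdef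
      have hprod : ∏ i ∈ s, lam i = ∏ m : Fin k, lam (f m) :=
        aux_prod_orderEmbOfFin s hs lam
      have hle : ∀ m : Fin k, (m : ℕ) ≤ (f m : ℕ) :=
        fun m => aux_strictMono_fin_le (fun m => f m) f.strictMono m
      have hK₀μ : ∀ m : Fin k, K₀ ≤ μ m := by
        intro m
        have := hμ_ge m
        nlinarith
      have hfactor : ∀ m : Fin k, |lam (f m)| ≤ μ m := by
        intro m
        rw [abs_le]
        constructor
        · have h1 : -K₀ ≤ lam (f m) := hlow _
          have h2 := hK₀μ m
          linarith
        · refine ord (Fin.castLE hkn m) (f m) ?_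
          rw [Fin.le_def]
          simpa using hle m
      obtain ⟨m₀, hm₀⟩ : i₀ ∈ Set.range f := by
        rw [Finset.range_orderEmbOfFin]; exact hi₀s
      have hspecial : |lam (f m₀)| ≤ μ m₀ / c₀ := by
        rw [hm₀, abs_le]
        have hKμ : K₀ ≤ μ m₀ / c₀ := by
          rw [le_div_iff₀ hc₀pos]
          have := hμ_ge m₀
          nlinarith
        constructor
        · have := hlow i₀; linarith
        · have : 0 ≤ μ m₀ / c₀ := div_nonneg (hμpos m₀).le hc₀pos.le
          linarith
      have habs : |∏ m : Fin k, lam (f m)| ≤ P / c₀ := by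
        rw [Finset.abs_prod]
        calc ∏ m : Fin k, |lam (f m)|
            ≤ ∏ m : Fin k, (if m = m₀ then μ m / c₀ else μ m) := by
              apply Finset.prod_le_prod
              · intro m _; exact abs_nonneg _
              · intro m _
                by_cases hm : m = m₀
                · subst hm; simpa using hspecial
                · simpa [hm] using hfactor m
          _ = P / c₀ := by
              rw [← Finset.mul_prod_erase Finset.univ _ (Finset.mem_univ m₀)]
              rw [if_pos rfl]
              rw [Finset.prod_congr rfl
                (fun m hm => if_neg (Finset.ne_of_mem_erase hm))]
              rw [hPdef, ← Finset.mul_prod_erase Finset.univ μ (Finset.mem_univ m₀)]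
              ring
      rw [hprod]
      have h2 := neg_abs_le (∏ m : Fin k, lam (f m))
      linarith
  -- the top subset
  set t : Finset (Fin n) := Finset.univ.map (Fin.castLEOrderEmb hkn).toEmbedding
    with htdef
  have htcard : t.card = k := by
    rw [htdef, Finset.card_map, Finset.card_univ, Fintype.card_fin]
  have htprod : ∏ i ∈ t, lam i = P := by
    rw [htdef, Finset.prod_map]
    rfl
  -- sigma_k lower bound
  have hσk : esymmR (k : ℤ) lam
      = ∑ s ∈ Finset.univ.powersetCard k, ∏ i ∈ s, lam i := by
    simp [esymmR, sigmaOn]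
  have htmem : t ∈ (Finset.univ : Finset (Fin n)).powersetCard k :=
    Finset.mem_powersetCard_univ.mpr htcard
  have hScard : ((Finset.univ : Finset (Fin n)).powersetCard k).card = n.choose k := by
    rw [Finset.card_powersetCard, Finset.card_univ, Fintype.card_fin]
  have hsum_lb : P - C * (P / c₀) ≤ esymmR (k : ℤ) lam := by
    rw [hσk, ← Finset.add_sum_erase _ _ htmem, htprod]
    have h1 : ∀ s ∈ ((Finset.univ : Finset (Fin n)).powersetCard k).erase t,
        -(P / c₀) ≤ ∏ i ∈ s, lam i := by
      intro s hsmem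
      exact key s (Finset.mem_powersetCard_univ.mp (Finset.mem_of_mem_erase hsmem))
    have h2 := Finset.card_nsmul_le_sum _ _ _ h1
    rw [nsmul_eq_mul] at h2
    have h3 : (((Finset.univ : Finset (Fin n)).powersetCard k).erase t).card
        ≤ n.choose k := by
      rw [← hScard]
      exact Finset.card_le_card (Finset.erase_subset _ _)
    have h4 : ((((Finset.univ : Finset (Fin n)).powersetCard k).erase t).card : ℝ)
        ≤ C := by rw [hCdef]; exact_mod_cast h3
    have h5 : 0 ≤ P / c₀ := by positivity
    have h6 := mul_le_mul_of_nonneg_right h4 h5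
    rw [mul_neg] at h2
    linarith [h2, h6]
  have hCne : C ≠ 0 := by intro h; rw [h] at hC1; linarith
  have hhalf : C * (P / c₀) = P / 2 := by
    rw [hc₀def, mul_div_assoc', mul_comm (2:ℝ) C, mul_div_mul_left _ _ hCne]
  -- P is large
  have hPbig : Λ * (c₀ * K₀) ^ (k - 1) ≤ P := by
    have hw : ∀ m : Fin k, (if (m : ℕ) = 0 then Λ else c₀ * K₀) ≤ μ m := by
      intro m
      by_cases hm : (m : ℕ) = 0
      · rw [if_pos hm]
        have hmk : Fin.castLE hkn m = ⟨0, by omega⟩ := Fin.ext (by simpa using hm)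
        have h0 : μ m = lam ⟨0, by omega⟩ := congrArg lam hmk
        rw [h0]
        exact hlam1
      · rw [if_neg hm]
        have := hμ_ge m
        linarith
    have h1 : ∏ m : Fin k, (if (m : ℕ) = 0 then Λ else c₀ * K₀) ≤ P := by
      rw [hPdef]
      apply Finset.prod_le_prod
      · intro m _
        by_cases hm : (m : ℕ) = 0 <;> simp [hm] <;> positivity
      · intro m _; exact hw m
    have hz : ((⟨0, by omega⟩ : Fin k) : ℕ) = 0 := rfl
    have h2 : ∏ m : Fin k, (if (m : ℕ) = 0 then Λ else c₀ * K₀)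
        = Λ * (c₀ * K₀) ^ (k - 1) := by
      rw [← Finset.mul_prod_erase Finset.univ _
        (Finset.mem_univ (⟨0, by omega⟩ : Fin k))]
      rw [if_pos hz]
      congr 1
      rw [Finset.prod_congr rfl (fun m hm => ?_), Finset.prod_const,
        Finset.card_erase_of_mem (Finset.mem_univ _), Finset.card_univ,
        Fintype.card_fin]
      rw [if_neg]
      intro h0
      apply Finset.ne_of_mem_erase hm
      ext
      simpa using h0
    linarith [h2 ▸ h1]
  have hΛprod : Λ * (c₀ * K₀) ^ (k - 1) = 2 * (N₁ + 1) := by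
    rw [hΛdef]
    exact div_mul_cancel₀ _ (ne_of_gt hpowpos)
  -- conclude
  have hσk1pos : 0 < esymmR ((k : ℤ) - 1) lam := by
    have h1 := hGam (k - 1) (by omega) (le_refl _)
    have hcast : (((k - 1 : ℕ) : ℤ)) = (k : ℤ) - 1 := by
      push_cast [Nat.cast_sub (by omega : 1 ≤ k)]
      ring
    rwa [hcast] at h1
  have hSf : esymmR (k : ℤ) lam + α * esymmR ((k : ℤ) - 1) lam ≤ N₁ := hS
  have hmul : 0 < α * esymmR ((k : ℤ) - 1) lam := mul_pos hα hσk1pos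
  have hfin : N₁ + 1 ≤ esymmR (k : ℤ) lam := by linarith
  linarith
end
end
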